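/- arXiv:2403.18304 — 2 statements merged into one kernel-verified Lean document; each statement's English description precedes it below -/
import Mathlib

section
/- If $X$ is a random variable with $X \le y$ almost surely for some $y>0$, and $0<t\le 1$, $h>0$, then $E[e^{hX}] \le \exp\left( \frac{e^{hy}-1}{y^t} E[|X|^t] \right)$. -/
/-!
Pointwise, `exp (h x) ≤ 1 + c |x|^t` with `c = (exp (h y) - 1) / y^t` for every `x ≤ y`: for `x ≤ 0`
the left side is at most `1`; for `0 < x ≤ y` convexity of `exp` bounds it by the chord
`1 + (exp (h y) - 1) (x / y)`, and `x / y ≤ (x / y)^t` because `x / y ∈ (0, 1]` and `t ≤ 1`.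
Taking expectations and using `1 + u ≤ exp u` gives the theorem.
-/

open MeasureTheory

namespace Real

theorem exp_mul_le_one_add_chord {x y h : ℝ} (hy : 0 < y) (hx : 0 ≤ x) (hxy : x ≤ y) :
    exp (h * x) ≤ 1 + (exp (h * y) - 1) * (x / y) := by
  have hl1 : x / y ≤ 1 := (div_le_one hy).2 hxy
  have hcomb : (1 - x / y) • (0 : ℝ) + (x / y) • (h * y) = h * x := by
    simp only [smul_eq_mul]
    field_simp
    ring
  have hconv := convexOn_exp.2 (Set.mem_univ 0) (Set.mem_univ (h * y)) (sub_nonneg.2 hl1)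
    (div_nonneg hx hy.le) (sub_add_cancel 1 (x / y))
  rw [hcomb] at hconv
  simp only [smul_eq_mul, exp_zero] at hconv
  linarith

theorem exp_mul_le_one_add_mul_abs_rpow {x y t h : ℝ} (hy : 0 < y) (hxy : x ≤ y) (ht : t ≤ 1)
    (hh : 0 ≤ h) : exp (h * x) ≤ 1 + (exp (h * y) - 1) / y ^ t * |x| ^ t := by
  have hexp : 0 ≤ exp (h * y) - 1 := by
    rw [sub_nonneg, one_le_exp_iff]
    positivity
  rcases le_or_gt x 0 with hx | hx
  · have hle : exp (h * x) ≤ 1 := exp_le_one_iff.2 (mul_nonpos_of_nonneg_of_nonpos hh hx)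
    have : 0 ≤ (exp (h * y) - 1) / y ^ t * |x| ^ t := by positivity
    linarith
  calc exp (h * x) ≤ 1 + (exp (h * y) - 1) * (x / y) := exp_mul_le_one_add_chord hy hx.le hxy
    _ ≤ 1 + (exp (h * y) - 1) * (x / y) ^ t := by
        gcongr
        exact self_le_rpow_of_le_one (div_nonneg hx.le hy.le) ((div_le_one hy).2 hxy) ht
    _ = 1 + (exp (h * y) - 1) / y ^ t * |x| ^ t := by
        rw [abs_of_pos hx, div_rpow hx.le hy.le]
        ring

end Real

theorem integral_le_exp_mul_integral_of_le_one_add_mul {Ω : Type*} [MeasurableSpace Ω]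
    {μ : Measure Ω} [IsProbabilityMeasure μ] {f g : Ω → ℝ} {c : ℝ} (hf : 0 ≤ᵐ[μ] f)
    (hg : Integrable g μ) (hfg : ∀ᵐ ω ∂μ, f ω ≤ 1 + c * g ω) :
    ∫ ω, f ω ∂μ ≤ Real.exp (c * ∫ ω, g ω ∂μ) :=
  calc ∫ ω, f ω ∂μ ≤ ∫ ω, (1 + c * g ω) ∂μ :=
        integral_mono_of_nonneg hf ((integrable_const 1).add (hg.const_mul c)) hfg
    _ = 1 + c * ∫ ω, g ω ∂μ := by
        rw [integral_add (integrable_const 1) (hg.const_mul c), integral_const_mul]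
        simp
    _ ≤ Real.exp (c * ∫ ω, g ω ∂μ) := by
        linarith [Real.add_one_le_exp (c * ∫ ω, g ω ∂μ)]

theorem stmt1_general {Ω : Type*} [MeasurableSpace Ω] (μ : Measure Ω) [IsProbabilityMeasure μ]
    (X : Ω → ℝ) (y t h : ℝ) (hy : 0 < y)
    (hXy : ∀ᵐ ω ∂μ, X ω ≤ y) (ht1 : t ≤ 1) (hh : 0 < h)
    (hint1 : Integrable (fun ω => |X ω| ^ t) μ) :
    ∫ ω, Real.exp (h * X ω) ∂μ ≤
      Real.exp ((Real.exp (h * y) - 1) / y ^ t * ∫ ω, |X ω| ^ t ∂μ) :=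
  integral_le_exp_mul_integral_of_le_one_add_mul (.of_forall fun _ => (Real.exp_pos _).le) hint1
    (hXy.mono fun _ hω => Real.exp_mul_le_one_add_mul_abs_rpow hy hω ht1 hh.le)

theorem stmt1 {Ω : Type*} [MeasurableSpace Ω] (μ : Measure Ω) [IsProbabilityMeasure μ]
    (X : Ω → ℝ) (hXm : Measurable X) (y t h : ℝ) (hy : 0 < y)
    (hXy : ∀ᵐ ω ∂μ, X ω ≤ y) (ht0 : 0 < t) (ht1 : t ≤ 1) (hh : 0 < h)
    (hint1 : Integrable (fun ω => |X ω| ^ t) μ)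
    (hint2 : Integrable (fun ω => Real.exp (h * X ω)) μ) :
    ∫ ω, Real.exp (h * X ω) ∂μ ≤
      Real.exp ((Real.exp (h * y) - 1) / y ^ t * ∫ ω, |X ω| ^ t ∂μ) :=
  stmt1_general μ X y t h hy hXy ht1 hh hint1
end

section
/- Let $Y$ be a real random variable, $p \ge 1$, $\alpha > 0$, and for $x>0$ define the truncation $Y_x^{(1)} = -x\mathbf{1}\{Y<-x\} + Y\mathbf{1}\{|Y|\le x\} + x\mathbf{1}\{Y>x\}$. If $r > p$ and $E[|Y|^p]<\infty$, then $\sum_{m=1}^{\infty} m^{\alpha(p-r)-1} E\left[|Y_{m^{\alpha}}^{(1)}|^r\right] < \infty$. -/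
/-!
Since `|Y_x| = min |Y| x`, the series is `E[∑ₘ (m+1)^(α(p-r)-1) min(|Y|, (m+1)^α)^r]`, so it
suffices to bound the partial sums of the inner series by `C |Y|^p`. For `y ≥ 0` split at
`N = ⌊y^(1/α)⌋`: the terms with `m < N` are at most `(m+1)^(αp-1)` and add up to
`O(N^(αp)) = O(y^p)`; the others are at most `y^r (m+1)^(-α(r-p)-1)` and add up to
`O(y^r (N+1)^(-α(r-p))) = O(y^p)`.
Both partial-sum estimates come from telescoping the tangent-line inequalities of `t ↦ t^b`,
concave for `0 ≤ b ≤ 1` and convex for `b ≤ 0`.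
-/

open MeasureTheory Finset

namespace Real

theorem one_add_mul_self_le_rpow_one_add_of_nonpos {t c : ℝ} (ht : -1 < t) (hc : c ≤ 0) :
    1 + c * t ≤ (1 + t) ^ c := by
  have hlog : log (1 + t) ≤ t := by linarith [log_le_sub_one_of_pos (by linarith : 0 < 1 + t)]
  rw [rpow_def_of_pos (by linarith)]
  nlinarith [add_one_le_exp (log (1 + t) * c)]

theorem sub_one_rpow_eq_rpow_mul_one_add_neg_inv_rpow {u : ℝ} (hu : 1 ≤ u) (c : ℝ) :
    (u - 1) ^ c = u ^ c * (1 + -u⁻¹) ^ c := by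
  have : u⁻¹ ≤ 1 := inv_le_one_of_one_le₀ hu
  rw [← mul_rpow (by linarith) (by linarith), mul_add, mul_neg, mul_inv_cancel₀ (by positivity),
    mul_one, sub_eq_add_neg]

theorem rpow_mul_one_add_mul_neg_inv_eq {u : ℝ} (hu : 0 < u) (c : ℝ) :
    u ^ c * (1 + c * -u⁻¹) = u ^ c - c * u ^ (c - 1) := by
  rw [rpow_sub_one hu.ne']
  ring

theorem mul_rpow_sub_one_le_rpow_sub_sub_one_rpow {b u : ℝ} (hb₀ : 0 ≤ b) (hb₁ : b ≤ 1)
    (hu : 1 ≤ u) : b * u ^ (b - 1) ≤ u ^ b - (u - 1) ^ b := by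
  have hu₀ : 0 < u := by linarith
  have hbern : (1 + -u⁻¹) ^ b ≤ 1 + b * -u⁻¹ :=
    rpow_one_add_le_one_add_mul_self (by linarith [inv_le_one_of_one_le₀ hu]) hb₀ hb₁
  have := mul_le_mul_of_nonneg_left hbern (rpow_nonneg hu₀.le b)
  rw [rpow_mul_one_add_mul_neg_inv_eq hu₀,
    ← sub_one_rpow_eq_rpow_mul_one_add_neg_inv_rpow hu] at this
  linarith

theorem rpow_sub_sub_one_rpow_le_mul_rpow_sub_one {c u : ℝ} (hc : c ≤ 0) (hu : 1 < u) :
    u ^ c - (u - 1) ^ c ≤ c * u ^ (c - 1) := by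
  have hu₀ : 0 < u := by linarith
  have hbern : 1 + c * -u⁻¹ ≤ (1 + -u⁻¹) ^ c :=
    one_add_mul_self_le_rpow_one_add_of_nonpos (by linarith [inv_lt_one_of_one_lt₀ hu]) hc
  have := mul_le_mul_of_nonneg_left hbern (rpow_nonneg hu₀.le c)
  rw [rpow_mul_one_add_mul_neg_inv_eq hu₀,
    ← sub_one_rpow_eq_rpow_mul_one_add_neg_inv_rpow hu.le] at this
  linarith

end Real

open Real

theorem abs_max_min_neg_eq_min_abs {α : Type*} [AddCommGroup α] [LinearOrder α]
    [IsOrderedAddMonoid α] {a x : α} (hx : 0 ≤ x) : |max (min a x) (-x)| = min |a| x := by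
  grind [abs_of_nonneg, abs_of_nonpos]

theorem sum_range_rpow_sub_one_le_of_le_one {b : ℝ} (hb₀ : 0 < b) (hb₁ : b ≤ 1) (N : ℕ) :
    ∑ m ∈ range N, ((m : ℝ) + 1) ^ (b - 1) ≤ (N : ℝ) ^ b / b := by
  rw [le_div_iff₀ hb₀, sum_mul]
  calc ∑ m ∈ range N, ((m : ℝ) + 1) ^ (b - 1) * b
      ≤ ∑ m ∈ range N, (((m + 1 : ℕ) : ℝ) ^ b - ((m : ℕ) : ℝ) ^ b) := by
        refine sum_le_sum fun m _ => ?_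
        have := mul_rpow_sub_one_le_rpow_sub_sub_one_rpow hb₀.le hb₁
          (le_add_of_nonneg_left m.cast_nonneg)
        push_cast
        simpa [mul_comm] using this
    _ = (N : ℝ) ^ b := by
        rw [sum_range_sub (fun m : ℕ => (m : ℝ) ^ b)]
        simp [zero_rpow hb₀.ne']

theorem sum_range_rpow_sub_one_le {a : ℝ} (ha : 0 < a) (N : ℕ) :
    ∑ m ∈ range N, ((m : ℝ) + 1) ^ (a - 1) ≤ (min a 1)⁻¹ * (N : ℝ) ^ a := by
  set b := min a 1
  have hb₀ : 0 < b := lt_min ha one_pos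
  calc ∑ m ∈ range N, ((m : ℝ) + 1) ^ (a - 1)
      ≤ ∑ m ∈ range N, (N : ℝ) ^ (a - b) * ((m : ℝ) + 1) ^ (b - 1) := by
        refine sum_le_sum fun m hm => ?_
        have hmN : (m : ℝ) + 1 ≤ N := by exact_mod_cast mem_range.1 hm
        rw [show a - 1 = (a - b) + (b - 1) by ring, rpow_add (by positivity)]
        exact mul_le_mul_of_nonneg_right
          (rpow_le_rpow (by positivity) hmN (sub_nonneg.2 (min_le_left a 1))) (by positivity)
    _ ≤ (N : ℝ) ^ (a - b) * ((N : ℝ) ^ b / b) := by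
        rw [← mul_sum]
        exact mul_le_mul_of_nonneg_left
          (sum_range_rpow_sub_one_le_of_le_one hb₀ (min_le_right a 1) N) (by positivity)
    _ = b⁻¹ * (N : ℝ) ^ a := by
        rw [mul_div_assoc', ← rpow_add' N.cast_nonneg (by simpa using ha.ne'), sub_add_cancel]
        ring

theorem sum_range_add_rpow_neg_sub_one_le {s x : ℝ} (hs : 0 < s) (hx : 1 ≤ x) (n : ℕ) :
    ∑ k ∈ range n, (x + k) ^ (-s - 1) ≤ (1 + s⁻¹) * x ^ (-s) := by
  cases n with
  | zero => simp only [range_zero, sum_empty]; positivity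
  | succ n =>
    have htel : s * ∑ k ∈ range n, (x + ↑(k + 1)) ^ (-s - 1) ≤ x ^ (-s) := by
      calc s * ∑ k ∈ range n, (x + ↑(k + 1)) ^ (-s - 1)
          ≤ ∑ k ∈ range n, ((x + k) ^ (-s) - (x + ↑(k + 1)) ^ (-s)) := by
            rw [mul_sum]
            refine sum_le_sum fun k _ => ?_
            have := rpow_sub_sub_one_rpow_le_mul_rpow_sub_one (c := -s) (u := x + ↑(k + 1))
              (by linarith) (by push_cast; linarith [(Nat.cast_nonneg k : (0 : ℝ) ≤ k)])
            push_cast at this ⊢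
            rw [show x + ((k : ℝ) + 1) - 1 = x + k by ring] at this
            linarith
        _ ≤ x ^ (-s) := by
            rw [sum_range_sub' (fun k : ℕ => (x + k) ^ (-s))]
            simp only [CharP.cast_eq_zero, add_zero, sub_le_self_iff]
            exact rpow_nonneg (by positivity) _
    have hfirst : x ^ (-s - 1) ≤ x ^ (-s) := rpow_le_rpow_of_exponent_le hx (by linarith)
    rw [sum_range_succ', Nat.cast_zero, add_zero, add_mul, one_mul, inv_mul_eq_div, add_comm]
    exact add_le_add hfirst (by rwa [le_div_iff₀ hs, mul_comm])

theorem rpow_mul_min_rpow_le_rpow {α p r x y : ℝ} (hx : 0 < x) (hy : 0 ≤ y) (hr : 0 ≤ r) :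
    x ^ (α * (p - r) - 1) * min y (x ^ α) ^ r ≤ x ^ (α * p - 1) := by
  calc x ^ (α * (p - r) - 1) * min y (x ^ α) ^ r ≤ x ^ (α * (p - r) - 1) * (x ^ α) ^ r := by
        gcongr
        exact min_le_right _ _
    _ = x ^ (α * p - 1) := by
        rw [← rpow_mul hx.le, ← rpow_add hx]
        ring_nf

theorem rpow_mul_min_rpow_le_rpow_mul_rpow {α p r x y : ℝ} (hx : 0 < x) (hy : 0 ≤ y)
    (hr : 0 ≤ r) :
    x ^ (α * (p - r) - 1) * min y (x ^ α) ^ r ≤ x ^ (-(α * (r - p)) - 1) * y ^ r := by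
  rw [show α * (p - r) = -(α * (r - p)) by ring]
  gcongr
  exact min_le_left _ _

theorem rpow_mul_le_rpow_of_le_rpow_inv {α p w y : ℝ} (hα : 0 < α) (hp : 0 ≤ p) (hy : 0 ≤ y)
    (hw₀ : 0 ≤ w) (hw : w ≤ y ^ α⁻¹) : w ^ (α * p) ≤ y ^ p := by
  calc w ^ (α * p) ≤ (y ^ α⁻¹) ^ (α * p) := rpow_le_rpow hw₀ hw (mul_nonneg hα.le hp)
    _ = y ^ p := by rw [← rpow_mul hy, inv_mul_cancel_left₀ hα.ne']

theorem rpow_neg_mul_mul_rpow_le {α p r w y : ℝ} (hα : 0 < α) (hpr : p ≤ r) (hr : r ≠ 0)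
    (hy : 0 ≤ y) (hw : y ^ α⁻¹ ≤ w) : w ^ (-(α * (r - p))) * y ^ r ≤ y ^ p := by
  rcases hy.eq_or_lt with rfl | hy₀
  · rw [zero_rpow hr, mul_zero]
    exact rpow_nonneg le_rfl p
  calc w ^ (-(α * (r - p))) * y ^ r ≤ (y ^ α⁻¹) ^ (-(α * (r - p))) * y ^ r := by
        refine mul_le_mul_of_nonneg_right ?_ (rpow_nonneg hy r)
        exact rpow_le_rpow_of_nonpos (rpow_pos_of_pos hy₀ _) hw
          (neg_nonpos.2 (mul_nonneg hα.le (sub_nonneg.2 hpr)))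
    _ = y ^ p := by
        rw [← rpow_mul hy, ← rpow_add hy₀]
        congr 1
        field_simp
        ring

theorem sum_range_rpow_mul_min_rpow_le {α p r y : ℝ} (hα : 0 < α) (hp : 0 < p) (hpr : p < r)
    (hy : 0 ≤ y) (n : ℕ) :
    ∑ m ∈ range n, ((m : ℝ) + 1) ^ (α * (p - r) - 1) * min y (((m : ℝ) + 1) ^ α) ^ r
      ≤ ((min (α * p) 1)⁻¹ + (1 + (α * (r - p))⁻¹)) * y ^ p := by
  set s := α * (r - p)
  set N := ⌊y ^ α⁻¹⌋₊
  have hr : 0 ≤ r := by linarith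
  have hs : 0 < s := mul_pos hα (sub_pos.2 hpr)
  have head : (N : ℝ) ^ (α * p) ≤ y ^ p :=
    rpow_mul_le_rpow_of_le_rpow_inv hα hp.le hy N.cast_nonneg (Nat.floor_le (rpow_nonneg hy _))
  have tail : ((N : ℝ) + 1) ^ (-s) * y ^ r ≤ y ^ p :=
    rpow_neg_mul_mul_rpow_le hα hpr.le (by linarith) hy (Nat.lt_floor_add_one _).le
  calc ∑ m ∈ range n, ((m : ℝ) + 1) ^ (α * (p - r) - 1) * min y (((m : ℝ) + 1) ^ α) ^ r
      ≤ ∑ m ∈ range (N + n),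
          ((m : ℝ) + 1) ^ (α * (p - r) - 1) * min y (((m : ℝ) + 1) ^ α) ^ r :=
        sum_le_sum_of_subset_of_nonneg (range_mono (by omega)) fun m _ _ => by positivity
    _ ≤ ∑ m ∈ range N, ((m : ℝ) + 1) ^ (α * p - 1)
          + (∑ k ∈ range n, (((N : ℝ) + 1) + k) ^ (-s - 1)) * y ^ r := by
        rw [sum_range_add, sum_mul]
        refine add_le_add (sum_le_sum fun m _ => ?_) (sum_le_sum fun k _ => ?_)
        · exact rpow_mul_min_rpow_le_rpow (by positivity) hy hr
        · rw [show ((N + k : ℕ) : ℝ) + 1 = (N : ℝ) + 1 + k by push_cast; ring]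
          exact rpow_mul_min_rpow_le_rpow_mul_rpow (by positivity) hy hr
    _ ≤ (min (α * p) 1)⁻¹ * (N : ℝ) ^ (α * p)
          + (1 + s⁻¹) * ((N : ℝ) + 1) ^ (-s) * y ^ r := by
        gcongr
        · exact sum_range_rpow_sub_one_le (by positivity) N
        · exact sum_range_add_rpow_neg_sub_one_le hs (by linarith [N.cast_nonneg (α := ℝ)]) n
    _ ≤ ((min (α * p) 1)⁻¹ + (1 + s⁻¹)) * y ^ p := by
        have h₁ := mul_le_mul_of_nonneg_left head
          (inv_nonneg.2 (le_min (mul_pos hα hp).le zero_le_one))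
        have h₂ := mul_le_mul_of_nonneg_left tail (by positivity : 0 ≤ 1 + s⁻¹)
        linarith

theorem summable_integral_of_sum_range_le {Ω : Type*} [MeasurableSpace Ω] {μ : Measure Ω}
    {f : ℕ → Ω → ℝ} {g : Ω → ℝ} (hf : ∀ m, Integrable (f m) μ) (hf₀ : ∀ m, 0 ≤ᵐ[μ] f m)
    (hg : Integrable g μ) (hfg : ∀ n, ∀ᵐ ω ∂μ, ∑ m ∈ range n, f m ω ≤ g ω) :
    Summable fun m => ∫ ω, f m ω ∂μ := by
  refine summable_of_sum_range_le (c := ∫ ω, g ω ∂μ) (fun m => integral_nonneg_of_ae (hf₀ m))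
    fun n => ?_
  rw [← integral_finsetSum _ fun m _ => hf m]
  exact integral_mono_ae (integrable_finsetSum _ fun m _ => hf m) hg (hfg n)

theorem stmt8 {Ω : Type*} [MeasurableSpace Ω] (μ : Measure Ω) [IsProbabilityMeasure μ]
    (Y : Ω → ℝ) (hYm : Measurable Y) (p α r : ℝ) (hp : 1 ≤ p) (hα : 0 < α)
    (hr : p < r) (hint : Integrable (fun ω => |Y ω| ^ p) μ) :
    Summable (fun m : ℕ =>
      ((m : ℝ) + 1) ^ (α * (p - r) - 1) *
        ∫ ω, |max (min (Y ω) (((m : ℝ) + 1) ^ α)) (-((m : ℝ) + 1) ^ α)| ^ r ∂μ) := by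
  have hx : ∀ m : ℕ, 0 ≤ ((m : ℝ) + 1) ^ α := fun m => by positivity
  have htrunc : ∀ m : ℕ, Integrable (fun ω => min |Y ω| (((m : ℝ) + 1) ^ α) ^ r) μ := fun m =>
    .of_bound ((hYm.abs.min measurable_const).pow_const r).aestronglyMeasurable
      ((((m : ℝ) + 1) ^ α) ^ r) (ae_of_all _ fun ω => by
        rw [Real.norm_of_nonneg (by positivity)]
        exact rpow_le_rpow (by positivity) (min_le_right _ _) (by linarith))
  refine (summable_integral_of_sum_range_le (fun m => (htrunc m).const_mul _)
    (fun m => ae_of_all _ fun ω => by positivity) (hint.const_mul _)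
    fun n => ae_of_all _ fun ω =>
      sum_range_rpow_mul_min_rpow_le hα (by linarith) hr (abs_nonneg (Y ω)) n).congr fun m => ?_
  simp_rw [integral_const_mul, abs_max_min_neg_eq_min_abs (hx m)]
end
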